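/- arXiv:2401.17614 — 2 statements merged into one kernel-verified Lean document; each statement's English description precedes it below -/
import Mathlib

section
/- Every interpolating sequence ζ for H^∞ containing at least two elements can be written as a disjoint union of two interpolating sequences ζ₁ and ζ₂ with δ(ζ_j) ≥ √(δ(ζ)) for j = 1, 2. -/
open Metric

/-- The pseudohyperbolic metric on the unit disk. -/
noncomputable def pRho (z w : ℂ) : ℝ :=
  ‖(z - w) / (1 - (starRingEnd ℂ) w * z)‖

/-- The interpolation characteristic `δ(ζ) = inf_k ∏_{j≠k} ρ(z_j, z_k)` of a sequence. -/
noncomputable def charSeq {ι : Type*} (z : ι → ℂ) : ℝ :=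
  ⨅ k : ι, ∏' j : {j : ι // j ≠ k}, pRho (z j) (z k)

/-!
By compactness of `ι → Bool` it suffices to two-colour every finite set `F` so that for each
`k ∈ F` the product of `ρ(z_j, z_k)` over the points `j ≠ k` of `F` with the colour of `k` is at
least `√δ`. Take a colouring maximising the product of `ρ` over all ordered pairs of distinct
points of the same colour. Recolouring `k` multiplies that product by `(cross / same)²`, where
`same` and `cross` are the products of `ρ(z_j, z_k)` over the points of the colour of `k` and of
the other colour, so `cross ≤ same` and hence `δ ≤ same * cross ≤ same²`.
-/

open Finset ComplexConjugate

lemma normSq_one_sub_conj_mul_sub_normSq_sub (z w : ℂ) :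
    Complex.normSq (1 - conj w * z) - Complex.normSq (z - w)
      = (1 - Complex.normSq w) * (1 - Complex.normSq z) := by
  simp only [Complex.normSq_apply, Complex.sub_re, Complex.sub_im, Complex.mul_re,
    Complex.mul_im, Complex.conj_re, Complex.conj_im, Complex.one_re, Complex.one_im]
  ring

lemma pRho_nonneg (z w : ℂ) : 0 ≤ pRho z w := norm_nonneg _

lemma pRho_comm (z w : ℂ) : pRho z w = pRho w z := by
  have hconj : conj (1 - conj w * z) = 1 - conj z * w := by simp [mul_comm]
  rw [pRho, pRho, norm_div, norm_div, norm_sub_rev z w, ← Complex.norm_conj (1 - conj w * z),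
    hconj]

lemma pRho_lt_one {z w : ℂ} (hz : ‖z‖ < 1) (hw : ‖w‖ < 1) : pRho z w < 1 := by
  have hsq : ‖z - w‖ ^ 2 < ‖1 - conj w * z‖ ^ 2 := by
    rw [Complex.sq_norm, Complex.sq_norm, ← sub_pos, normSq_one_sub_conj_mul_sub_normSq_sub,
      ← Complex.sq_norm, ← Complex.sq_norm]
    have := norm_nonneg z
    have := norm_nonneg w
    apply mul_pos <;> nlinarith
  have hlt := lt_of_pow_lt_pow_left₀ 2 (norm_nonneg _) hsq
  rw [pRho, norm_div, div_lt_one ((norm_nonneg _).trans_lt hlt)]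
  exact hlt

namespace Real

variable {ι : Type*} {f : ι → ℝ}

lemma tprod_le_prod_of_nonneg_of_le_one (h0 : ∀ i, 0 ≤ f i) (h1 : ∀ i, f i ≤ 1)
    (s : Finset ι) : ∏' i, f i ≤ ∏ i ∈ s, f i := by
  have hanti := Finset.prod_anti_set_of_le_one h0 h1
  have hprod : HasProd f (⨅ s : Finset ι, ∏ i ∈ s, f i) :=
    tendsto_atTop_ciInf hanti ⟨0, by rintro _ ⟨t, rfl⟩; exact prod_nonneg fun i _ => h0 i⟩
  exact hprod.tprod_eq ▸ hanti.le_of_tendsto hprod s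

lemma le_tprod_of_le_prod {a : ℝ} (ha : a ≤ 1) (h : ∀ s : Finset ι, a ≤ ∏ i ∈ s, f i) :
    a ≤ ∏' i, f i := by
  by_cases hf : Multipliable f
  · exact ge_of_tendsto' hf.hasProd h
  · exact (tprod_eq_one_of_not_multipliable hf).symm ▸ ha

end Real

section charSeq

variable {ι : Type*} (z : ι → ℂ)

lemma charSeq_le_prod (hz : ∀ i, ‖z i‖ < 1) {k : ι} {s : Finset ι} (hk : k ∉ s) :
    charSeq z ≤ ∏ j ∈ s, pRho (z j) (z k) := by
  classical
  have hbdd : BddBelow (Set.range fun k => ∏' j : {j : ι // j ≠ k}, pRho (z j) (z k)) :=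
    ⟨0, by rintro _ ⟨i, rfl⟩; exact tprod_nonneg fun j => pRho_nonneg _ _⟩
  calc charSeq z ≤ ∏' j : {j : ι // j ≠ k}, pRho (z j) (z k) := ciInf_le hbdd k
    _ ≤ ∏ j ∈ s.subtype (· ≠ k), pRho (z j) (z k) :=
      Real.tprod_le_prod_of_nonneg_of_le_one
        (f := fun j : {j : ι // j ≠ k} => pRho (z j) (z k))
        (fun j => pRho_nonneg _ _) (fun j => (pRho_lt_one (hz j) (hz k)).le) _
    _ = ∏ j ∈ s, pRho (z j) (z k) :=
      prod_subtype_of_mem (fun j => pRho (z j) (z k)) fun j hj => ne_of_mem_of_not_mem hj hk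

lemma le_charSeq_restrict (T : Set ι) (hT : T.Nonempty) {a : ℝ} (ha : a ≤ 1)
    (h : ∀ k ∈ T, ∀ s : Finset ι, k ∉ s → ↑s ⊆ T → a ≤ ∏ j ∈ s, pRho (z j) (z k)) :
    a ≤ charSeq fun i : T => z i := by
  have := hT.to_subtype
  refine le_ciInf fun k => Real.le_tprod_of_le_prod ha fun t => ?_
  let e : {j : T // j ≠ k} ↪ ι :=
    (Function.Embedding.subtype _).trans (Function.Embedding.subtype _)
  have hk : (k : ι) ∉ t.map e := by
    simp only [mem_map]
    rintro ⟨j, -, hj⟩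
    exact j.2 (Subtype.ext hj)
  have hsub : ↑(t.map e) ⊆ T := by
    intro i hi
    simp only [coe_map, Set.mem_image] at hi
    obtain ⟨j, -, rfl⟩ := hi
    exact j.1.2
  exact (h k k.2 _ hk hsub).trans_eq (prod_map t e _)

end charSeq

section coloring

variable {ι : Type*} [DecidableEq ι]

lemma prod_prod_erase_eq_sq_mul {M : Type*} [CommMonoid M] (g : ι → ι → M)
    (hg : ∀ i j, g i j = g j i) {F : Finset ι} {k : ι} (hk : k ∈ F) :
    ∏ i ∈ F, ∏ j ∈ F.erase i, g j i
      = (∏ j ∈ F.erase k, g j k) ^ 2 * ∏ i ∈ F.erase k, ∏ j ∈ (F.erase i).erase k, g j i := by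
  have hsplit : ∀ i ∈ F.erase k,
      ∏ j ∈ F.erase i, g j i = g k i * ∏ j ∈ (F.erase i).erase k, g j i := fun i hi =>
    (mul_prod_erase _ _ (mem_erase.mpr ⟨(ne_of_mem_erase hi).symm, hk⟩)).symm
  rw [← mul_prod_erase F _ hk, prod_congr rfl hsplit, prod_mul_distrib,
    prod_congr rfl fun i _ => hg k i, sq, mul_assoc]

lemma exists_forall_le_of_eqOn {α : Type*} [LinearOrder α] (F : Finset ι)
    (Φ : (ι → Bool) → α) (hΦ : ∀ c c', Set.EqOn c c' F → Φ c = Φ c') :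
    ∃ c, ∀ c', Φ c' ≤ Φ c := by
  let extend (d : F → Bool) (i : ι) : Bool := if h : i ∈ F then d ⟨i, h⟩ else false
  obtain ⟨d, hd⟩ := Finite.exists_max fun d => Φ (extend d)
  refine ⟨extend d, fun c => ?_⟩
  rw [hΦ c (extend fun i => c i) fun i hi => by simp only [extend, dif_pos (mem_coe.mp hi)]]
  exact hd fun i => c i

theorem exists_coloring_prod_erase_le_sq (W : ι → ι → ℝ) (hsymm : ∀ i j, W i j = W j i)
    (hpos : ∀ i j, i ≠ j → 0 < W i j) (F : Finset ι) :
    ∃ c : ι → Bool, ∀ k ∈ F,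
      ∏ j ∈ F.erase k, W j k ≤ (∏ j ∈ F.erase k with c j = c k, W j k) ^ 2 := by
  let g (c : ι → Bool) (j k : ι) : ℝ := if c j = c k then W j k else 1
  have hg_symm : ∀ c j k, g c j k = g c k j := fun c j k => by
    simp only [g, hsymm j k, eq_comm]
  have hg_pos : ∀ c j k, j ≠ k → 0 < g c j k := fun c j k hjk => by
    unfold g; split_ifs
    exacts [hpos j k hjk, one_pos]
  obtain ⟨c, hc⟩ := exists_forall_le_of_eqOn F (fun c => ∏ i ∈ F, ∏ j ∈ F.erase i, g c j i)
    fun c c' h => prod_congr rfl fun i hi => prod_congr rfl fun j hj => by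
      simp only [g, h hi, h (mem_of_mem_erase hj)]
  refine ⟨c, fun k hk => ?_⟩
  let B (c : ι → Bool) : ℝ := ∏ j ∈ F.erase k, g c j k
  let R (c : ι → Bool) : ℝ := ∏ i ∈ F.erase k, ∏ j ∈ (F.erase i).erase k, g c j i
  have hB_pos : ∀ c, 0 < B c := fun c => prod_pos fun j hj => hg_pos c j k (ne_of_mem_erase hj)
  have hR_pos : ∀ c, 0 < R c := fun c => prod_pos fun i _ =>
    prod_pos fun j hj => hg_pos c j i (ne_of_mem_erase (mem_of_mem_erase hj))
  let c' := Function.update c k (!c k)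
  have hR : R c' = R c := prod_congr rfl fun i hi => prod_congr rfl fun j hj => by
    simp only [g, c', Function.update_of_ne (ne_of_mem_erase hi),
      Function.update_of_ne (ne_of_mem_erase hj)]
  have hB' : B c' = ∏ j ∈ F.erase k, if c j = c k then 1 else W j k :=
    prod_congr rfl fun j hj => by
      simp only [g, c', Function.update_of_ne (ne_of_mem_erase hj), Function.update_self]
      cases c j <;> cases c k <;> rfl
  have hflip : B c' ≤ B c := by
    have h := hc c'
    rw [prod_prod_erase_eq_sq_mul _ (hg_symm c') hk, prod_prod_erase_eq_sq_mul _ (hg_symm c) hk]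
      at h
    change B c' ^ 2 * R c' ≤ B c ^ 2 * R c at h
    rw [hR] at h
    exact (pow_le_pow_iff_left₀ (hB_pos c').le (hB_pos c).le two_ne_zero).mp
      (le_of_mul_le_mul_right h (hR_pos c))
  calc ∏ j ∈ F.erase k, W j k = B c * B c' := by
        rw [hB', ← prod_mul_distrib]
        exact prod_congr rfl fun j _ => by simp only [g]; split_ifs <;> simp
    _ ≤ B c * B c := mul_le_mul_of_nonneg_left hflip (hB_pos c).le
    _ = (∏ j ∈ F.erase k with c j = c k, W j k) ^ 2 := by rw [sq, prod_filter]

theorem exists_coloring_sqrt_le_prod (W : ι → ι → ℝ) (hsymm : ∀ i j, W i j = W j i)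
    (hle : ∀ i j, W i j ≤ 1) {δ : ℝ} (hδ : 0 < δ)
    (hprod : ∀ k (s : Finset ι), k ∉ s → δ ≤ ∏ j ∈ s, W j k) :
    ∃ c : ι → Bool, ∀ k (s : Finset ι), k ∉ s → (∀ j ∈ s, c j = c k) →
      √δ ≤ ∏ j ∈ s, W j k := by
  have hpos : ∀ i j, i ≠ j → 0 < W i j := fun i j hij =>
    hδ.trans_le (by simpa using hprod j {i} (by simpa using hij.symm))
  have hnonneg : ∀ k (s : Finset ι), ∀ j ∈ s.erase k, 0 ≤ W j k := fun k s j hj =>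
    (hpos j k (ne_of_mem_erase hj)).le
  let D (F : Finset ι) : Set (ι → Bool) :=
    {c | ∀ k ∈ F, √δ ≤ ∏ j ∈ F.erase k with c j = c k, W j k}
  have hD_nonempty : ∀ F, (D F).Nonempty := fun F => by
    obtain ⟨c, hc⟩ := exists_coloring_prod_erase_le_sq W hsymm hpos F
    refine ⟨c, fun k hk => (Real.sqrt_le_left ?_).mpr ?_⟩
    · exact prod_nonneg fun j hj => hnonneg k F j (mem_of_mem_filter j hj)
    · exact (hprod k _ (notMem_erase k F)).trans (hc k hk)
  have hD_closed : ∀ F, IsClosed (D F) := fun F => by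
    simp only [D, Set.ofPred_forall]
    refine isClosed_biInter fun k _ => isClosed_le continuous_const ?_
    simp only [prod_filter]
    refine continuous_finsetProd _ fun j _ => ?_
    have hjk : Continuous fun c : ι → Bool => (c j, c k) := by fun_prop
    exact (continuous_of_discreteTopology
      (f := fun p : Bool × Bool => if p.1 = p.2 then W j k else 1)).comp hjk
  have hD_anti : ∀ F F', F ⊆ F' → D F' ⊆ D F := fun F F' h c hc k hk =>
    (hc k (h hk)).trans <| prod_le_prod_of_subset_of_le_one
      (filter_subset_filter _ (erase_subset_erase k h))
      (fun j hj => hnonneg k F' j (mem_of_mem_filter j hj)) fun j _ _ => hle j k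
  obtain ⟨c, hc⟩ := IsCompact.nonempty_iInter_of_directed_nonempty_isCompact_isClosed D
    (fun F F' => ⟨F ∪ F', hD_anti _ _ subset_union_left, hD_anti _ _ subset_union_right⟩)
    hD_nonempty (fun F => (hD_closed F).isCompact) hD_closed
  refine ⟨c, fun k s hk hs => ?_⟩
  have := Set.mem_iInter.mp hc (insert k s) k (mem_insert_self k s)
  rwa [erase_insert hk, filter_true_of_mem hs] at this

end coloring

lemma exists_nonempty_compl_nonempty_const_on_parts {α : Type*} [Nontrivial α] (c : α → Bool) :
    ∃ S : Set α, S.Nonempty ∧ Sᶜ.Nonempty ∧ ∀ i j, (i ∈ S ↔ j ∈ S) → c i = c j := by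
  by_cases hconst : ∀ i j, c i = c j
  · obtain ⟨x, y, hxy⟩ := exists_pair_ne α
    exact ⟨{x}, ⟨x, rfl⟩, ⟨y, hxy.symm⟩, fun i j _ => hconst i j⟩
  · push Not at hconst
    obtain ⟨m, n, hmn⟩ := hconst
    refine ⟨{i | c i = c m}, ⟨m, rfl⟩, ⟨n, hmn.symm⟩, fun i j hij => ?_⟩
    simp only [Set.mem_ofPred_eq] at hij
    cases hi : c i <;> cases hj : c j <;> cases hm : c m <;> simp_all

theorem interpolating_splitting_general (ζ : ℕ → ℂ) (hζ : ∀ n, ζ n ∈ ball (0 : ℂ) 1)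
    (hδ : 0 < charSeq ζ) :
    ∃ S : Set ℕ, S.Nonempty ∧ Sᶜ.Nonempty ∧
      Real.sqrt (charSeq ζ) ≤ charSeq (fun i : S => ζ i) ∧
      Real.sqrt (charSeq ζ) ≤ charSeq (fun i : ↥Sᶜ => ζ i) := by
  have hdisk : ∀ n, ‖ζ n‖ < 1 := fun n => mem_ball_zero_iff.mp (hζ n)
  have hprod : ∀ k (s : Finset ℕ), k ∉ s → charSeq ζ ≤ ∏ j ∈ s, pRho (ζ j) (ζ k) :=
    fun k s hk => charSeq_le_prod ζ hdisk hk
  have hsqrt_le_one : √(charSeq ζ) ≤ 1 :=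
    Real.sqrt_le_one.mpr (by simpa using hprod 0 ∅ (notMem_empty 0))
  obtain ⟨c, hc⟩ := exists_coloring_sqrt_le_prod (fun j k => pRho (ζ j) (ζ k))
    (fun j k => pRho_comm _ _) (fun j k => (pRho_lt_one (hdisk j) (hdisk k)).le) hδ hprod
  obtain ⟨S, hS, hSc, hcS⟩ := exists_nonempty_compl_nonempty_const_on_parts c
  refine ⟨S, hS, hSc, ?_, ?_⟩
  · exact le_charSeq_restrict ζ S hS hsqrt_le_one fun k hk s hks hsS =>
      hc k s hks fun j hj => hcS j k (iff_of_true (hsS hj) hk)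
  · exact le_charSeq_restrict ζ Sᶜ hSc hsqrt_le_one fun k hk s hks hsS =>
      hc k s hks fun j hj => hcS j k (iff_of_false (hsS hj) hk)

/-- Every interpolating sequence (i.e. `δ(ζ) > 0`) with at least two elements is the
disjoint union of two interpolating subsequences `ζ₁, ζ₂` with `δ(ζ_j) ≥ √(δ(ζ))`. -/
theorem interpolating_splitting (ζ : ℕ → ℂ) (hζ : ∀ n, ζ n ∈ ball (0 : ℂ) 1)
    (hinj : Function.Injective ζ)
    (hδ : 0 < charSeq ζ) :
    ∃ S : Set ℕ, S.Nonempty ∧ Sᶜ.Nonempty ∧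
      Real.sqrt (charSeq ζ) ≤ charSeq (fun i : S => ζ i) ∧
      Real.sqrt (charSeq ζ) ≤ charSeq (fun i : ↥Sᶜ => ζ i) :=
  interpolating_splitting_general ζ hζ hδ
end

section
/- Let ζ = {z_m} be an ε-chain in 𝔻 (so ρ(z_i,z_j) ≥ ε for i ≠ j) with interpolation characteristic δ(ζ) > 0. Fix r = ε/4 and N ≥ 1, and for each m let z_{m,1},…,z_{m,N} be N equally spaced (with respect to ρ) points on the boundary of the pseudohyperbolic disk D(z_m, r). Then the combined sequence ζ' = {z_{m,j}} satisfies δ(ζ') = inf_{(m₁,j₁)} [∏_{j=1}^{N} ∏_{m ≠ m₁} ρ(z_{m₁,j₁}, z_{m,j})] · N·r^{N−1}·(1−r²)/(1−r^{2N}). -/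
open Metric

/-!
Each cluster `z_{m,·}` is the image of the regular polygon `r c μʲ` (`μ = e^{2πi/N}`, `|c| = 1`)
under the disc automorphism `z ↦ (z + z_m) / (1 + z̄_m z)`. Since `ρ` is invariant under disc
automorphisms and rotations, the product of the distances from one vertex to the other `N - 1`
is `∏_{i=1}^{N-1} r |1 - μⁱ| / |1 - r² μⁱ|`, and `∏_{i=1}^{N-1} (1 - s μⁱ) = 1 + s + ⋯ + s^{N-1}`
evaluates it to `N r^{N-1} (1 - r²) / (1 - r^{2N})`, the same for every point. As all factors lie
in `[0, 1]`, the infinite product defining `δ(ζ')` converges and splits into the factor over the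
other clusters times this constant, which then comes out of the infimum.
-/

open Finset

lemma normSq_one_sub_conj_mul (z w : ℂ) :
    Complex.normSq (1 - starRingEnd ℂ w * z) =
      Complex.normSq (z - w) + (1 - Complex.normSq z) * (1 - Complex.normSq w) := by
  have h : ((Complex.normSq (1 - starRingEnd ℂ w * z) : ℝ) : ℂ) =
      ((Complex.normSq (z - w) + (1 - Complex.normSq z) * (1 - Complex.normSq w) : ℝ) : ℂ) := by
    push_cast
    simp only [← Complex.mul_conj, map_sub, map_mul, map_one, Complex.conj_conj]
    ring
  exact_mod_cast h

lemma pRho_le_one {z w : ℂ} (hz : ‖z‖ ≤ 1) (hw : ‖w‖ ≤ 1) : pRho z w ≤ 1 := by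
  rw [pRho, norm_div]
  refine div_le_one_of_le₀ ?_ (norm_nonneg _)
  have hz' : Complex.normSq z ≤ 1 := by rw [Complex.normSq_eq_norm_sq]; nlinarith [norm_nonneg z]
  have hw' : Complex.normSq w ≤ 1 := by rw [Complex.normSq_eq_norm_sq]; nlinarith [norm_nonneg w]
  rw [← sq_le_sq₀ (norm_nonneg _) (norm_nonneg _), Complex.sq_norm, Complex.sq_norm,
    normSq_one_sub_conj_mul]
  nlinarith

lemma pRho_mul_left_of_norm_eq_one {u : ℂ} (hu : ‖u‖ = 1) (z w : ℂ) :
    pRho (u * z) (u * w) = pRho z w := by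
  have huu : starRingEnd ℂ u * u = 1 := by rw [Complex.conj_mul', hu]; norm_num
  have hden : 1 - starRingEnd ℂ (u * w) * (u * z) = 1 - starRingEnd ℂ w * z := by
    rw [map_mul]; linear_combination (-(starRingEnd ℂ w * z)) * huu
  rw [pRho, pRho, hden, ← mul_sub, mul_div_assoc, norm_mul, hu, one_mul]

lemma pRho_ofReal_mul (r : ℝ) (z : ℂ) :
    pRho (r * z) r = |r| * ‖1 - z‖ / ‖1 - (r : ℂ) ^ 2 * z‖ := by
  rw [pRho, Complex.conj_ofReal, ← mul_sub_one, norm_div, norm_mul, Complex.norm_real,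
    Real.norm_eq_abs, norm_sub_rev z, sq, mul_assoc]

/-- The automorphism of the unit disc sending `0` to `a`. -/
noncomputable def mobius (a z : ℂ) : ℂ := (z + a) / (1 + starRingEnd ℂ a * z)

lemma norm_mobius (a z : ℂ) : ‖mobius a z‖ = pRho z (-a) := by
  simp [mobius, pRho, sub_eq_add_neg]

lemma norm_mobius_le_one {a z : ℂ} (ha : ‖a‖ < 1) (hz : ‖z‖ ≤ 1) : ‖mobius a z‖ ≤ 1 := by
  rw [norm_mobius]
  exact pRho_le_one hz (by simpa using ha.le)

lemma one_add_conj_mul_ne_zero {a z : ℂ} (ha : ‖a‖ < 1) (hz : ‖z‖ < 1) :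
    1 + starRingEnd ℂ a * z ≠ 0 := by
  intro h
  have : ‖starRingEnd ℂ a * z‖ < 1 := by
    rw [norm_mul, Complex.norm_conj]; nlinarith [norm_nonneg a, norm_nonneg z]
  rw [show starRingEnd ℂ a * z = -1 by linear_combination h] at this
  simp at this

lemma pRho_mobius_mobius {a z w : ℂ} (ha : ‖a‖ < 1) (hz : ‖z‖ < 1) (hw : ‖w‖ < 1) :
    pRho (mobius a z) (mobius a w) = pRho z w := by
  have haz := one_add_conj_mul_ne_zero ha hz
  have haw := one_add_conj_mul_ne_zero ha hw
  have hwa : 1 + a * starRingEnd ℂ w ≠ 0 := mul_comm a _ ▸ one_add_conj_mul_ne_zero hw ha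
  have hwz : 1 - starRingEnd ℂ w * z ≠ 0 := by
    simpa [sub_eq_add_neg] using one_add_conj_mul_ne_zero (a := -w) (by simpa using hw) hz
  have haa : 1 - starRingEnd ℂ a * a ≠ 0 := by
    simpa [sub_eq_add_neg] using one_add_conj_mul_ne_zero (a := -a) (by simpa using ha) ha
  have hnum : mobius a z - mobius a w =
      (1 - starRingEnd ℂ a * a) * (z - w) /
        ((1 + starRingEnd ℂ a * z) * (1 + starRingEnd ℂ a * w)) := by
    rw [mobius, mobius, div_sub_div _ _ haz haw]
    ring
  have hden : 1 - starRingEnd ℂ (mobius a w) * mobius a z =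
      (1 - starRingEnd ℂ a * a) * (1 - starRingEnd ℂ w * z) /
        ((1 + a * starRingEnd ℂ w) * (1 + starRingEnd ℂ a * z)) := by
    simp only [mobius, map_div₀, map_add, map_mul, map_one, Complex.conj_conj]
    rw [div_mul_div_comm, one_sub_div (mul_ne_zero hwa haz)]
    ring
  have key : (mobius a z - mobius a w) / (1 - starRingEnd ℂ (mobius a w) * mobius a z) =
      (z - w) / (1 - starRingEnd ℂ w * z) *
        (starRingEnd ℂ (1 + starRingEnd ℂ a * w) / (1 + starRingEnd ℂ a * w)) := by
    rw [hnum, hden, map_add, map_one, map_mul, Complex.conj_conj, div_div_div_eq,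
      div_mul_div_comm, div_eq_div_iff (by simp [*]) (by simp [*])]
    ring
  rw [pRho, key, norm_mul, norm_div (starRingEnd ℂ _), Complex.norm_conj,
    div_self (norm_ne_zero_iff.mpr haw), mul_one, pRho]

open Polynomial in
lemma IsPrimitiveRoot.prod_one_sub_mul_pow_eq_geom_sum {R : Type*} [CommRing R] [IsDomain R]
    {n : ℕ} {μ : R} (hμ : IsPrimitiveRoot μ (n + 1)) (s : R) :
    ∏ k ∈ range n, (1 - s * μ ^ (k + 1)) = ∑ i ∈ range (n + 1), s ^ i := by
  have h := X_pow_sub_C_eq_prod hμ n.succ_pos (rfl : s ^ (n + 1) = s ^ (n + 1))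
  rw [map_pow, ← geom_sum₂_mul, prod_range_succ', pow_zero, one_mul] at h
  replace h := congrArg (eval 1) (mul_right_cancel₀ (X_sub_C_ne_zero s) h)
  simp only [eval_finsetSum, eval_prod, eval_mul, eval_pow, eval_sub, eval_X, eval_C,
    one_pow, one_mul] at h
  rw [← sum_range_reflect, h]
  exact prod_congr rfl fun k _ => by ring

lemma pow_val_add_of_pow_eq_one {M : Type*} [Monoid M] {N : ℕ} {μ : M} (hμ : μ ^ N = 1)
    (a b : Fin N) :
    μ ^ ((a + b : Fin N) : ℕ) = μ ^ (a : ℕ) * μ ^ (b : ℕ) := by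
  rw [Fin.val_add, ← pow_eq_pow_mod _ hμ, pow_add]

lemma Fin.prod_univ_erase_eq_prod_add_succ {M : Type*} [CommMonoid M] {n : ℕ}
    (f : Fin (n + 1) → M) (k : Fin (n + 1)) :
    ∏ j ∈ univ.erase k, f j = ∏ i : Fin n, f (k + i.succ) := by
  rw [← Finset.prod_equiv (Equiv.addLeft k) (s := univ.erase 0) (g := f) (by simp)
    (fun _ _ => rfl), Fin.univ_succ, Finset.erase_cons, Finset.prod_map]
  rfl

lemma prod_erase_pRho_regular_polygon {N : ℕ} [NeZero N] {μ : ℂ} (hμ : IsPrimitiveRoot μ N)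
    {r : ℝ} (hr0 : 0 ≤ r) (hr1 : r < 1) {c : ℂ} (hc : ‖c‖ = 1) (k : Fin N) :
    ∏ j ∈ univ.erase k, pRho (r * (c * μ ^ (j : ℕ))) (r * (c * μ ^ (k : ℕ))) =
      N * r ^ (N - 1) * (1 - r ^ 2) / (1 - r ^ (2 * N)) := by
  obtain ⟨n, rfl⟩ := Nat.exists_eq_succ_of_ne_zero (NeZero.ne N)
  have hck : ‖c * μ ^ (k : ℕ)‖ = 1 := by simp [hc, hμ.norm'_eq_one (NeZero.ne _)]
  have hterm (i : Fin n) :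
      pRho (r * (c * μ ^ ((k + i.succ : Fin (n + 1)) : ℕ))) (r * (c * μ ^ (k : ℕ))) =
        r * ‖1 - μ ^ ((i : ℕ) + 1)‖ / ‖1 - (r : ℂ) ^ 2 * μ ^ ((i : ℕ) + 1)‖ := by
    rw [pow_val_add_of_pow_eq_one hμ.pow_eq_one, Fin.val_succ,
      show (r : ℂ) * (c * (μ ^ (k : ℕ) * μ ^ ((i : ℕ) + 1))) =
        c * μ ^ (k : ℕ) * (r * μ ^ ((i : ℕ) + 1)) by ring,
      show (r : ℂ) * (c * μ ^ (k : ℕ)) = c * μ ^ (k : ℕ) * r by ring,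
      pRho_mul_left_of_norm_eq_one hck, pRho_ofReal_mul, abs_of_nonneg hr0]
  have hgeom : (1 - r ^ 2) * ∑ i ∈ range (n + 1), (r ^ 2) ^ i = 1 - r ^ (2 * (n + 1)) := by
    rw [mul_neg_geom_sum, pow_mul]
  have hsum : ‖∑ i ∈ range (n + 1), ((r : ℂ) ^ 2) ^ i‖ = ∑ i ∈ range (n + 1), (r ^ 2) ^ i := by
    rw [← Real.norm_of_nonneg (by positivity : (0 : ℝ) ≤ ∑ i ∈ range (n + 1), (r ^ 2) ^ i),
      ← Complex.norm_real]
    push_cast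
    rfl
  calc _ = ∏ i ∈ range n, r * ‖1 - μ ^ (i + 1)‖ / ‖1 - (r : ℂ) ^ 2 * μ ^ (i + 1)‖ := by
        rw [Fin.prod_univ_erase_eq_prod_add_succ, Fintype.prod_congr _ _ hterm,
          Fin.prod_univ_eq_prod_range (fun i => r * ‖1 - μ ^ (i + 1)‖ /
            ‖1 - (r : ℂ) ^ 2 * μ ^ (i + 1)‖)]
    _ = r ^ n * ‖∏ i ∈ range n, (1 - μ ^ (i + 1))‖ /
          ‖∏ i ∈ range n, (1 - (r : ℂ) ^ 2 * μ ^ (i + 1))‖ := by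
        rw [prod_div_distrib, prod_mul_distrib, prod_const, card_range, norm_prod, norm_prod]
    _ = r ^ n * (n + 1) / ∑ i ∈ range (n + 1), (r ^ 2) ^ i := by
        rw [hμ.prod_one_sub_pow_eq_order, hμ.prod_one_sub_mul_pow_eq_geom_sum, hsum]
        norm_cast
    _ = _ := by
        rw [← hgeom, Nat.succ_sub_one, Nat.cast_succ, mul_comm (1 - r ^ 2),
          mul_div_mul_right _ _ (by nlinarith : (1 : ℝ) - r ^ 2 ≠ 0), mul_comm (r ^ n)]

lemma prod_erase_pRho_mobius_regular_polygon {N : ℕ} [NeZero N] {μ : ℂ}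
    (hμ : IsPrimitiveRoot μ N) {r : ℝ} (hr0 : 0 ≤ r) (hr1 : r < 1) {a c : ℂ} (ha : ‖a‖ < 1)
    (hc : ‖c‖ = 1) (k : Fin N) :
    ∏ j ∈ univ.erase k,
        pRho (mobius a (r * (c * μ ^ (j : ℕ)))) (mobius a (r * (c * μ ^ (k : ℕ)))) =
      N * r ^ (N - 1) * (1 - r ^ 2) / (1 - r ^ (2 * N)) := by
  have hvertex (j : Fin N) : ‖(r : ℂ) * (c * μ ^ (j : ℕ))‖ < 1 := by
    simpa [hc, hμ.norm'_eq_one (NeZero.ne N), abs_of_nonneg hr0] using hr1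
  rw [← prod_erase_pRho_regular_polygon hμ hr0 hr1 hc k]
  exact prod_congr rfl fun j _ => pRho_mobius_mobius ha (hvertex j) (hvertex k)

lemma multipliable_of_nonneg_of_le_one {ι : Type*} {f : ι → ℝ} (h0 : 0 ≤ f) (h1 : f ≤ 1) :
    Multipliable f := by
  classical
  refine ⟨⨅ s : Finset ι, ∏ i ∈ s, f i, tendsto_atTop_ciInf (fun s t hst => ?_) ⟨0, ?_⟩⟩
  · rw [← Finset.prod_sdiff hst]
    exact mul_le_of_le_one_left (prod_nonneg fun i _ => h0 i)
      (prod_le_one (fun i _ => h0 i) fun i _ => h1 i)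
  · rintro _ ⟨s, rfl⟩
    exact prod_nonneg fun i _ => h0 i

lemma tprod_ne_eq_tprod_fst_ne_mul_prod {M K : Type*} [Fintype K] [DecidableEq K]
    (f : M × K → ℝ) (h0 : 0 ≤ f) (h1 : f ≤ 1) (p : M × K) :
    ∏' q : {q : M × K // q ≠ p}, f q =
      (∏' q : {q : M × K // q.1 ≠ p.1}, f q) * ∏ j ∈ univ.erase p.2, f (p.1, j) := by
  set T : Finset (M × K) := {p.1} ×ˢ univ.erase p.2
  have hunion : {q : M × K | q ≠ p} = {q | q.1 ≠ p.1} ∪ ↑T := by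
    ext ⟨m, j⟩
    by_cases hm : m = p.1 <;> simp [T, hm, Prod.ext_iff]
  have hdisj : Disjoint {q : M × K | q.1 ≠ p.1} ↑T := by
    rw [Set.disjoint_left]
    rintro q hq hT
    simp only [T, coe_product, coe_singleton, Set.mem_prod, Set.mem_singleton_iff] at hT
    exact hq hT.1
  have hmult (s : Set (M × K)) : Multipliable (f ∘ (↑) : s → ℝ) :=
    multipliable_of_nonneg_of_le_one (fun q => h0 q) (fun q => h1 q)
  calc ∏' q : {q : M × K // q ≠ p}, f q = ∏' q : ↑({q : M × K | q.1 ≠ p.1} ∪ ↑T), f q := by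
        rw [← hunion]; rfl
    _ = _ := by
        rw [Multipliable.tprod_union_disjoint hdisj (hmult _) (hmult _), Finset.tprod_subtype',
          Finset.prod_product, Finset.prod_singleton]
        rfl

theorem charSeq_of_equally_spaced_enrichment_general
    (ζ : ℕ → ℂ) (hζ : ∀ m, ζ m ∈ ball (0 : ℂ) 1)
    (ε : ℝ) (hε : ε ∈ Set.Ioo (0:ℝ) 1)
    (r : ℝ) (hr : r = ε / 4) (N : ℕ) (hN : 1 ≤ N)
    (ω : ℕ → Fin N → ℂ) (hωabs : ∀ m j, ‖ω m j‖ = 1)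
    (hωsp : ∀ m j, ω m j = ω m ⟨0, hN⟩ * Complex.exp (2 * Real.pi * Complex.I * (j : ℕ) / N))
    (ζ' : ℕ × Fin N → ℂ)
    (hζ' : ∀ m j, ζ' (m, j) =
      ((r : ℂ) * ω m j + ζ m) / (1 + (starRingEnd ℂ) (ζ m) * ((r : ℂ) * ω m j))) :
    charSeq ζ' =
      (⨅ p : ℕ × Fin N, ∏' q : {q : ℕ × Fin N // q.1 ≠ p.1}, pRho (ζ' q) (ζ' p)) *
        (N * r ^ (N - 1) * (1 - r ^ 2) / (1 - r ^ (2 * N))) := by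
  have hr0 : 0 ≤ r := by linarith [hε.1]
  have hr1 : r < 1 := by linarith [hε.2]
  have : NeZero N := ⟨by omega⟩
  set μ := Complex.exp (2 * Real.pi * Complex.I / N)
  have hμ : IsPrimitiveRoot μ N := Complex.isPrimitiveRoot_exp N (NeZero.ne N)
  have hζ'm (m : ℕ) (j : Fin N) : ζ' (m, j) = mobius (ζ m) (r * (ω m ⟨0, hN⟩ * μ ^ (j : ℕ))) := by
    rw [hζ', mobius, hωsp, ← Complex.exp_nat_mul, mul_div_assoc', mul_comm (j : ℂ)]
  have hζ1 (m : ℕ) : ‖ζ m‖ < 1 := by simpa using hζ m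
  have hcluster (p : ℕ × Fin N) :
      ∏ j ∈ univ.erase p.2, pRho (ζ' (p.1, j)) (ζ' p) =
        N * r ^ (N - 1) * (1 - r ^ 2) / (1 - r ^ (2 * N)) := by
    obtain ⟨m, k⟩ := p
    simp only [hζ'm]
    exact prod_erase_pRho_mobius_regular_polygon hμ hr0 hr1 (hζ1 m) (hωabs m _) k
  have hζ'1 (q : ℕ × Fin N) : ‖ζ' q‖ ≤ 1 := by
    rw [← q.eta, hζ'm]
    exact norm_mobius_le_one (hζ1 _)
      (by simp [hωabs, abs_of_nonneg hr0, hμ.norm'_eq_one (NeZero.ne N), hr1.le])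
  rw [charSeq, Real.iInf_mul_of_nonneg (hcluster (0, 0) ▸ prod_nonneg fun _ _ => norm_nonneg _)]
  refine iInf_congr fun p => ?_
  rw [tprod_ne_eq_tprod_fst_ne_mul_prod (fun q => pRho (ζ' q) (ζ' p)) (fun q => norm_nonneg _)
    (fun q => pRho_le_one (hζ'1 q) (hζ'1 p)) p, hcluster p]

/-- If `ζ` is an `ε`-separated sequence and `ζ' = {z_{m,j}}` consists, for each `m`, of
`N` equally spaced (w.r.t. `ρ`) points on the boundary of the pseudohyperbolic disk
`D(z_m, r)` with `r = ε/4`, then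
`δ(ζ') = inf_{(m₁,j₁)} [∏_{j=1}^{N} ∏_{m ≠ m₁} ρ(z_{m₁,j₁}, z_{m,j})] · N r^{N−1}(1−r²)/(1−r^{2N})`. -/
theorem charSeq_of_equally_spaced_enrichment
    (ζ : ℕ → ℂ) (hζ : ∀ m, ζ m ∈ ball (0 : ℂ) 1)
    (ε : ℝ) (hε : ε ∈ Set.Ioo (0:ℝ) 1)
    (hsep : ∀ i j : ℕ, i ≠ j → ε ≤ pRho (ζ i) (ζ j))
    (hδ : 0 < charSeq ζ)
    (r : ℝ) (hr : r = ε / 4) (N : ℕ) (hN : 1 ≤ N)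
    (ω : ℕ → Fin N → ℂ) (hωabs : ∀ m j, ‖ω m j‖ = 1)
    (hωsp : ∀ m j, ω m j = ω m ⟨0, hN⟩ * Complex.exp (2 * Real.pi * Complex.I * (j : ℕ) / N))
    (ζ' : ℕ × Fin N → ℂ)
    (hζ' : ∀ m j, ζ' (m, j) =
      ((r : ℂ) * ω m j + ζ m) / (1 + (starRingEnd ℂ) (ζ m) * ((r : ℂ) * ω m j))) :
    charSeq ζ' =
      (⨅ p : ℕ × Fin N, ∏' q : {q : ℕ × Fin N // q.1 ≠ p.1}, pRho (ζ' q) (ζ' p)) *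
        (N * r ^ (N - 1) * (1 - r ^ 2) / (1 - r ^ (2 * N))) :=
  charSeq_of_equally_spaced_enrichment_general ζ hζ ε hε r hr N hN ω hωabs hωsp ζ' hζ'
end
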